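/- Let T = [0.4999, 0.5001] × [0.2341, 0.2342], S₁ = [0.01917, 0.02005] × [0.1763, 0.1765] and S₂ = [−0.02005, −0.01917] × [0.1763, 0.1765] be rectangles in ℝ². Suppose Q₀ ∈ T, that Q₁ = β(Q₀ − (1,0)) lies in S₂, and that for some integer m ≥ 1 the point Q_{m+1} = β^m(Q₁) = (x, y) lies in S₁. Then x − y√69 < −(4/23)√69. -/

import Mathlib

noncomputable section

/-- `√69` as a real number. -/
def s69 : ℝ := Real.sqrt 69

/-- The fundamental unit `ε = (25 + 3√69)/2` of `ℚ(√69)`. -/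
def eps69 : ℝ := (25 + 3 * s69) / 2

/-- Its conjugate `ε' = (25 − 3√69)/2 = ε⁻¹`. -/
def eps69' : ℝ := (25 - 3 * s69) / 2

/-- The pair `(ξ, ξ') = (x + y√69, x − y√69)` of a point `(x, y) ∈ ℝ²`. -/
def toPair (P : ℝ × ℝ) : ℝ × ℝ := (P.1 + P.2 * s69, P.1 - P.2 * s69)

/-- The point `(x, y)` with pair `(ξ, ξ')`. -/
def ofPair (p : ℝ × ℝ) : ℝ × ℝ := ((p.1 + p.2) / 2, (p.1 - p.2) / (2 * s69))

/-- The map `β : ξ ↦ εξ − (18 + 2√69)`, applied simultaneously to an element and its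
conjugate, in `(x,y)`-coordinates on `ℝ²`. -/
def betaMap (P : ℝ × ℝ) : ℝ × ℝ :=
  ofPair (eps69 * (toPair P).1 - 18 - 2 * s69, eps69' * (toPair P).2 - 18 + 2 * s69)

/-- The rectangle `T = [0.4999, 0.5001] × [0.2341, 0.2342]`. -/
def T69 : Set (ℝ × ℝ) := Set.Icc 0.4999 0.5001 ×ˢ Set.Icc 0.2341 0.2342

/-- The rectangle `S₁ = [0.01917, 0.02005] × [0.1763, 0.1765]`. -/
def S1_69 : Set (ℝ × ℝ) := Set.Icc 0.01917 0.02005 ×ˢ Set.Icc 0.1763 0.1765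

/-- The rectangle `S₂ = [−0.02005, −0.01917] × [0.1763, 0.1765]`. -/
def S2_69 : Set (ℝ × ℝ) := Set.Icc (-0.02005) (-0.01917) ×ˢ Set.Icc 0.1763 0.1765

/-! In the conjugate coordinate `ξ' = x − y√69`, `β` acts as the increasing affine map
`ξ' ↦ ε'ξ' − 18 + 2√69` (`ε' > 0`), whose fixed point is `−(4/23)√69`; hence the half-line
`ξ' < −(4/23)√69` is forward invariant. The point `Q₁ ∈ S₂` already lies in it, since
`0.1763 > 4/23`, and so do all its images under `β`. -/

lemma s69_pos : 0 < s69 := Real.sqrt_pos.mpr (by norm_num)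

lemma s69_mul_self : s69 * s69 = 69 := Real.mul_self_sqrt (by norm_num)

lemma eps69'_pos : 0 < eps69' := by
  unfold eps69'
  nlinarith [s69_mul_self, s69_pos]

lemma toPair_ofPair (p : ℝ × ℝ) : toPair (ofPair p) = p := by
  have hs : s69 ≠ 0 := s69_pos.ne'
  ext <;> simp only [toPair, ofPair] <;> field_simp <;> ring

def betaConj (t : ℝ) : ℝ := eps69' * t - 18 + 2 * s69

lemma semiconj_toPair_snd_betaMap :
    Function.Semiconj (fun P => (toPair P).2) betaMap betaConj := fun P => by
  simp only [betaMap, toPair_ofPair, betaConj]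

lemma strictMono_betaConj : StrictMono betaConj := fun _ _ hlt => by
  unfold betaConj
  nlinarith [eps69'_pos]

lemma betaConj_fixed : betaConj (-(4 / 23) * s69) = -(4 / 23) * s69 := by
  unfold betaConj eps69'
  nlinarith [s69_mul_self]

lemma mapsTo_betaMap_conj_lt :
    Set.MapsTo betaMap ((fun P => (toPair P).2) ⁻¹' Set.Iio (-(4 / 23) * s69))
      ((fun P => (toPair P).2) ⁻¹' Set.Iio (-(4 / 23) * s69)) :=
  semiconj_toPair_snd_betaMap.mapsTo_preimage
    (by simpa only [betaConj_fixed] using strictMono_betaConj.mapsTo_Iio (b := -(4 / 23) * s69))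

lemma toPair_snd_lt_of_mem_S2 {P : ℝ × ℝ} (hP : P ∈ S2_69) : (toPair P).2 < -(4 / 23) * s69 := by
  obtain ⟨⟨-, hx⟩, ⟨hy, -⟩⟩ := hP
  simp only [toPair]
  nlinarith [s69_pos]

theorem lemma_m1_sqrt69_general (Q₀ : ℝ × ℝ)
    (hQ₁ : betaMap (Q₀ - (1, 0)) ∈ S2_69)
    (m : ℕ) :
    (betaMap^[m] (betaMap (Q₀ - (1, 0)))).1
      - (betaMap^[m] (betaMap (Q₀ - (1, 0)))).2 * s69 < -(4 / 23) * s69 :=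
  mapsTo_betaMap_conj_lt.iterate m (toPair_snd_lt_of_mem_S2 hQ₁)

/-- If `Q₀ ∈ T`, `Q₁ = β(Q₀ − (1,0)) ∈ S₂` and `Q_{m+1} = β^m(Q₁) = (x,y) ∈ S₁` for some
`m ≥ 1`, then `x − y√69 < −(4/23)√69`. -/
theorem lemma_m1_sqrt69 (Q₀ : ℝ × ℝ) (hQ₀ : Q₀ ∈ T69)
    (hQ₁ : betaMap (Q₀ - (1, 0)) ∈ S2_69)
    (m : ℕ) (hm : 1 ≤ m) (h : betaMap^[m] (betaMap (Q₀ - (1, 0))) ∈ S1_69) :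
    (betaMap^[m] (betaMap (Q₀ - (1, 0)))).1
      - (betaMap^[m] (betaMap (Q₀ - (1, 0)))).2 * s69 < -(4 / 23) * s69 :=
  lemma_m1_sqrt69_general Q₀ hQ₁ m

end
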